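/- arXiv:1406.6350 — 5 statements merged into one kernel-verified Lean document; each statement's English description precedes it below -/
import Mathlib

section
/- Let (X,d) be a metric space and let f : X → ℝ be Lipschitz and bounded. Then for every t ≥ 0 the function Q_t f is Lipschitz and bounded, and its Lipschitz constant satisfies Lip(Q_t f) ≤ 2 Lip(f). -/
/-!
For `t > 0` one has `m ≤ Q_t f ≤ f` whenever `m ≤ f`, which gives boundedness. For the
Lipschitz bound, take `y` almost minimising the infimum defining `Q_t f x'`, with `r = d(x', y)`
and `D = d(x, x')`. Comparing `Q_t f x` with `f y + d(x, y)² / 2t` and with `f x` bounds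
`Q_t f x - (f y + r² / 2t)` by `(D + r)² / 2t - r² / 2t` and by `K (D + r) - r² / 2t`, and the
smaller of these two is at most `2 K D`, whatever `r ≥ 0` is.
-/

open Filter MeasureTheory Set Topology

/-- Hopf–Lax formula: `Q_t f (x) = inf_y f(y) + d(x,y)²/(2t)` for `t > 0`, `Q_0 f = f`. -/
noncomputable def hopfLax {X : Type*} [MetricSpace X] (f : X → ℝ) (t : ℝ) (x : X) : ℝ :=
  if t = 0 then f x else ⨅ y : X, f y + dist x y ^ 2 / (2 * t)

-- If both terms of the `min` exceeded the bound then, with `s = K t`, the second would force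
-- `r < 2 s` and the first `4 s - 2 r < D`; together they give `(r - 2 s) (r - 4 s) < 0`.
lemma min_sq_div_mul_le {K t D r : ℝ} (hK : 0 ≤ K) (ht : 0 < t) (hD : 0 ≤ D) (hr : 0 ≤ r) :
    min ((D + r) ^ 2 / (2 * t)) (K * (D + r)) ≤ r ^ 2 / (2 * t) + 2 * K * D := by
  by_contra! h
  rw [lt_min_iff, div_add' _ _ _ (by positivity), div_lt_div_iff_of_pos_right (by positivity),
    div_lt_iff₀ (by positivity)] at h
  obtain ⟨h₁, h₂⟩ := h
  have hs : 0 ≤ K * t := by positivity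
  have hr_lt : r < 2 * (K * t) := by nlinarith
  have hD_gt : 4 * (K * t) - 2 * r < D := by nlinarith
  nlinarith [mul_le_mul_of_nonneg_left hD_gt.le hs]

section HopfLax

variable {X : Type*} [MetricSpace X] {f : X → ℝ} {t m : ℝ}

@[simp]
lemma hopfLax_zero (f : X → ℝ) : hopfLax f 0 = f := by
  funext x
  simp [hopfLax]

lemma hopfLax_of_ne_zero (ht : t ≠ 0) (x : X) :
    hopfLax f t x = ⨅ y, f y + dist x y ^ 2 / (2 * t) := by
  simp [hopfLax, ht]

lemma le_add_dist_sq_div (hm : ∀ y, m ≤ f y) (ht : 0 ≤ t) (x y : X) :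
    m ≤ f y + dist x y ^ 2 / (2 * t) :=
  le_add_of_le_of_nonneg (hm y) (by positivity)

lemma bddBelow_range_add_dist_sq_div (hm : ∀ y, m ≤ f y) (ht : 0 ≤ t) (x : X) :
    BddBelow (range fun y => f y + dist x y ^ 2 / (2 * t)) :=
  ⟨m, forall_mem_range.2 (le_add_dist_sq_div hm ht x)⟩

lemma hopfLax_le_add_dist_sq_div (hm : ∀ y, m ≤ f y) (ht : 0 < t) (x y : X) :
    hopfLax f t x ≤ f y + dist x y ^ 2 / (2 * t) := by
  rw [hopfLax_of_ne_zero ht.ne']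
  exact ciInf_le (bddBelow_range_add_dist_sq_div hm ht.le x) y

lemma hopfLax_le_self (hm : ∀ y, m ≤ f y) (ht : 0 ≤ t) (x : X) : hopfLax f t x ≤ f x := by
  rcases ht.eq_or_lt with rfl | ht
  · simp
  · simpa using hopfLax_le_add_dist_sq_div hm ht x x

lemma le_hopfLax (hm : ∀ y, m ≤ f y) (ht : 0 ≤ t) (x : X) : m ≤ hopfLax f t x := by
  rcases ht.eq_or_lt with rfl | ht
  · simpa using hm x
  · have : Nonempty X := ⟨x⟩
    rw [hopfLax_of_ne_zero ht.ne']
    exact le_ciInf (le_add_dist_sq_div hm ht.le x)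

lemma hopfLax_le_hopfLax_add {K : NNReal} (hf : LipschitzWith K f) (hm : ∀ y, m ≤ f y)
    (ht : 0 < t) (x x' : X) : hopfLax f t x ≤ hopfLax f t x' + 2 * K * dist x x' := by
  refine le_of_forall_pos_le_add fun ε hε => ?_
  obtain ⟨y, hy⟩ : ∃ y, f y + dist x' y ^ 2 / (2 * t) < hopfLax f t x' + ε := by
    have : Nonempty X := ⟨x⟩
    rw [hopfLax_of_ne_zero ht.ne']
    exact exists_lt_of_ciInf_lt (lt_add_of_pos_right _ hε)
  have hdist : dist x y ≤ dist x x' + dist x' y := dist_triangle x x' y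
  have h_sq : hopfLax f t x - f y ≤ (dist x x' + dist x' y) ^ 2 / (2 * t) := by
    have := hopfLax_le_add_dist_sq_div hm ht x y
    have : dist x y ^ 2 ≤ (dist x x' + dist x' y) ^ 2 := by gcongr
    have : dist x y ^ 2 / (2 * t) ≤ (dist x x' + dist x' y) ^ 2 / (2 * t) := by gcongr
    linarith
  have h_lip : hopfLax f t x - f y ≤ K * (dist x x' + dist x' y) := by
    have := hopfLax_le_self hm ht.le x
    have := hf.le_add_mul x y
    have : (K : ℝ) * dist x y ≤ K * (dist x x' + dist x' y) := by gcongr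
    linarith
  have := (le_min h_sq h_lip).trans (min_sq_div_mul_le K.2 ht dist_nonneg dist_nonneg)
  linarith

end HopfLax

/-- If `f : X → ℝ` is Lipschitz (with constant `K`) and bounded, then for every
`t ≥ 0` the function `Q_t f` is Lipschitz with constant at most `2 K`, and bounded. -/
theorem stmt0 {X : Type*} [MetricSpace X] (f : X → ℝ) (K : NNReal)
    (hf : LipschitzWith K f) (hb : ∃ M : ℝ, ∀ x, |f x| ≤ M)
    (t : ℝ) (ht : 0 ≤ t) :
    LipschitzWith (2 * K) (hopfLax f t) ∧ ∃ M : ℝ, ∀ x, |hopfLax f t x| ≤ M := by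
  obtain ⟨M, hM⟩ := hb
  have hm : ∀ y, -M ≤ f y := fun y => (abs_le.1 (hM y)).1
  refine ⟨?_, M, fun x => abs_le.2 ⟨le_hopfLax hm ht x,
    (hopfLax_le_self hm ht x).trans (abs_le.1 (hM x)).2⟩⟩
  rcases ht.eq_or_lt with rfl | ht
  · rw [hopfLax_zero]
    exact hf.weaken (le_mul_of_one_le_left K.2 one_le_two)
  · refine LipschitzWith.of_le_add_mul _ fun x x' => ?_
    simpa using hopfLax_le_hopfLax_add hf hm ht x x'
end

section
/- Let (X,d) be a metric space and let f : X → ℝ be Lipschitz and bounded. Then for every x ∈ X the map [0,∞) ∋ t ↦ Q_t f(x) is continuous; in particular Q_t f(x) → f(x) as t ↓ 0. -/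
/-!
Writing `s = 1 / (2t)`, for `t > 0` the value `Q_t f(x)` is `φ(s) = inf_y (f y + s d(x,y)²)`, an
infimum of affine functions of `s`. It is finite because `f` is Lipschitz, hence `φ` is concave on
`(0, ∞)` and therefore continuous there. At `t = 0` continuity follows from the squeeze
`f x - K² t / 2 ≤ Q_t f(x) ≤ f x`, the lower bound being Young's inequality
`K d ≤ K² t / 2 + d² / (2t)`.
-/

open Filter Set Topology

noncomputable def penalizedInf {X : Type*} [PseudoMetricSpace X] (f : X → ℝ) (x : X) (s : ℝ) :
    ℝ :=
  ⨅ y : X, f y + s * dist x y ^ 2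

section PseudoMetricSpace

variable {X : Type*} [PseudoMetricSpace X] {f : X → ℝ} {K : NNReal} {s : ℝ}

theorem LipschitzWith.sub_sq_div_le_add_mul_dist_sq (hf : LipschitzWith K f) (hs : 0 < s)
    (x y : X) : f x - (K : ℝ) ^ 2 / (4 * s) ≤ f y + s * dist x y ^ 2 := by
  have hlip : f x - f y ≤ K * dist x y := (abs_le.1 (hf.dist_le_mul x y)).2
  have hyoung : (K : ℝ) * dist x y ≤ (K : ℝ) ^ 2 / (4 * s) + s * dist x y ^ 2 := by
    rw [div_add' _ _ _ (by positivity), le_div_iff₀ (by positivity)]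
    nlinarith [sq_nonneg ((K : ℝ) - 2 * s * dist x y)]
  linarith

theorem LipschitzWith.bddBelow_range_add_mul_dist_sq (hf : LipschitzWith K f) (hs : 0 < s)
    (x : X) : BddBelow (range fun y => f y + s * dist x y ^ 2) :=
  ⟨_, forall_mem_range.2 (hf.sub_sq_div_le_add_mul_dist_sq hs x)⟩

theorem penalizedInf_le (hf : LipschitzWith K f) (hs : 0 < s) (x : X) :
    penalizedInf f x s ≤ f x := by
  simpa [penalizedInf] using ciInf_le (hf.bddBelow_range_add_mul_dist_sq hs x) x

theorem sub_sq_div_le_penalizedInf (hf : LipschitzWith K f) (hs : 0 < s) (x : X) :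
    f x - (K : ℝ) ^ 2 / (4 * s) ≤ penalizedInf f x s :=
  have : Nonempty X := ⟨x⟩
  le_ciInf (hf.sub_sq_div_le_add_mul_dist_sq hs x)

theorem concaveOn_penalizedInf (hf : LipschitzWith K f) (x : X) :
    ConcaveOn ℝ (Ioi 0) (penalizedInf f x) := by
  have : Nonempty X := ⟨x⟩
  refine ⟨convex_Ioi 0, fun s hs t ht a b ha hb hab => le_ciInf fun y => ?_⟩
  have hs' := ciInf_le (hf.bddBelow_range_add_mul_dist_sq hs x) y
  have ht' := ciInf_le (hf.bddBelow_range_add_mul_dist_sq ht x) y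
  have hsplit : f y + (a • s + b • t) * dist x y ^ 2
      = a * (f y + s * dist x y ^ 2) + b * (f y + t * dist x y ^ 2) := by
    rw [smul_eq_mul, smul_eq_mul]
    linear_combination (-f y) * hab
  rw [hsplit, smul_eq_mul, smul_eq_mul]
  gcongr <;> assumption

end PseudoMetricSpace

section MetricSpace

variable {X : Type*} [MetricSpace X] {f : X → ℝ} {K : NNReal}

theorem hopfLax_eq_penalizedInf {t : ℝ} (ht : t ≠ 0) (x : X) :
    hopfLax f t x = penalizedInf f x (2 * t)⁻¹ := by
  simp only [hopfLax, ht, if_false, penalizedInf, div_eq_inv_mul]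

theorem hopfLax_mem_Icc (hf : LipschitzWith K f) {t : ℝ} (ht : 0 ≤ t) (x : X) :
    hopfLax f t x ∈ Icc (f x - (K : ℝ) ^ 2 * t / 2) (f x) := by
  rcases ht.eq_or_lt with rfl | ht
  · simp [hopfLax]
  have hs : 0 < (2 * t)⁻¹ := by positivity
  have hK : (K : ℝ) ^ 2 / (4 * (2 * t)⁻¹) = (K : ℝ) ^ 2 * t / 2 := by
    field_simp
    ring
  rw [hopfLax_eq_penalizedInf ht.ne', ← hK]
  exact ⟨sub_sq_div_le_penalizedInf hf hs x, penalizedInf_le hf hs x⟩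

theorem continuousAt_hopfLax (hf : LipschitzWith K f) {t : ℝ} (ht : 0 < t) (x : X) :
    ContinuousAt (fun t => hopfLax f t x) t := by
  have hφ : ContinuousAt (penalizedInf f x) (2 * t)⁻¹ :=
    (concaveOn_penalizedInf hf x).continuousOn isOpen_Ioi |>.continuousAt
      (isOpen_Ioi.mem_nhds (show (0 : ℝ) < (2 * t)⁻¹ by positivity))
  have hQ : (fun t => hopfLax f t x) =ᶠ[𝓝 t] fun t => penalizedInf f x (2 * t)⁻¹ :=
    eventually_ne_nhds ht.ne' |>.mono fun t ht => hopfLax_eq_penalizedInf ht x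
  have hinv : ContinuousAt (fun t : ℝ => (2 * t)⁻¹) t :=
    (continuousAt_const.mul continuousAt_id).inv₀ (by simpa using ht.ne')
  exact (hφ.comp (f := fun t : ℝ => (2 * t)⁻¹) hinv).congr hQ.symm

theorem tendsto_hopfLax_nhdsWithin_Ici_zero (hf : LipschitzWith K f) (x : X) :
    Tendsto (fun t => hopfLax f t x) (𝓝[Ici 0] 0) (𝓝 (f x)) := by
  have hlower : Tendsto (fun t : ℝ => f x - (K : ℝ) ^ 2 * t / 2) (𝓝[Ici 0] 0) (𝓝 (f x)) := by
    refine tendsto_nhdsWithin_of_tendsto_nhds ?_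
    have hc : Continuous fun t : ℝ => f x - (K : ℝ) ^ 2 * t / 2 := by fun_prop
    simpa using hc.tendsto 0
  refine tendsto_of_tendsto_of_tendsto_of_le_of_le' hlower tendsto_const_nhds ?_ ?_ <;>
    filter_upwards [self_mem_nhdsWithin] with t ht
  exacts [(hopfLax_mem_Icc hf ht x).1, (hopfLax_mem_Icc hf ht x).2]

end MetricSpace

theorem stmt1_general {X : Type*} [MetricSpace X] (f : X → ℝ) (K : NNReal)
    (hf : LipschitzWith K f) (x : X) :
    ContinuousOn (fun t : ℝ => hopfLax f t x) (Set.Ici 0) ∧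
      Tendsto (fun t : ℝ => hopfLax f t x) (𝓝[>] 0) (𝓝 (f x)) := by
  have h0 := tendsto_hopfLax_nhdsWithin_Ici_zero hf x
  refine ⟨fun t ht => ?_, h0.mono_left (nhdsWithin_mono _ Ioi_subset_Ici_self)⟩
  rcases (mem_Ici.1 ht).eq_or_lt with rfl | ht
  · simpa [ContinuousWithinAt, hopfLax] using h0
  · exact (continuousAt_hopfLax hf ht x).continuousWithinAt

/-- If `f : X → ℝ` is Lipschitz and bounded, then for every `x ∈ X` the map
`[0,∞) ∋ t ↦ Q_t f (x)` is continuous; in particular `Q_t f (x) → f x` as `t ↓ 0`. -/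
theorem stmt1 {X : Type*} [MetricSpace X] (f : X → ℝ) (K : NNReal)
    (hf : LipschitzWith K f) (hb : ∃ M : ℝ, ∀ x, |f x| ≤ M) (x : X) :
    ContinuousOn (fun t : ℝ => hopfLax f t x) (Set.Ici 0) ∧
      Tendsto (fun t : ℝ => hopfLax f t x) (𝓝[>] 0) (𝓝 (f x)) :=
  stmt1_general f K hf x
end

section
/- Let ψ : X → ℝ be a bounded function on a metric space (X,d) which is constant equal to c outside some bounded set S ⊂ X. Then there exists a bounded set B ⊂ X such that Q_s ψ(x) = c for every s ∈ (0,1] and every x ∉ B. -/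
/-!
Outside the `√(2(c - inf ψ))`-neighbourhood of `S`, moving from `x` to any point `y ∈ S` costs a
quadratic penalty `d(x,y)²/(2s) ≥ d(x,y)²/2` that exceeds the possible gain `c - ψ(y)`, while
moving to a point outside `S` gains nothing. Hence `y = x` is a minimiser and `Q_s ψ(x) = ψ(x) = c`.
-/

open Filter MeasureTheory Set Topology

section HopfLax

variable {X : Type*} [MetricSpace X] {f : X → ℝ} {t : ℝ} {x : X}

theorem hopfLax_eq_self_of_forall_le (ht : t ≠ 0)
    (h : ∀ y, f x ≤ f y + dist x y ^ 2 / (2 * t)) : hopfLax f t x = f x := by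
  have : Nonempty X := ⟨x⟩
  have hbdd : BddBelow (range fun y => f y + dist x y ^ 2 / (2 * t)) :=
    ⟨f x, by rintro _ ⟨y, rfl⟩; exact h y⟩
  rw [hopfLax, if_neg ht]
  refine le_antisymm ?_ (le_ciInf h)
  simpa using ciInf_le hbdd x

theorem hopfLax_eq_of_eq_const_off {m c T : ℝ} {S : Set X} (hm : ∀ y, m ≤ f y)
    (hc : ∀ y ∉ S, f y = c) (ht : t ∈ Ioc 0 T)
    (hx : x ∉ Metric.cthickening (√(2 * T * (c - m))) S) : hopfLax f t x = c := by
  obtain ⟨ht0, htT⟩ := ht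
  have hxS : x ∉ S := fun hxS => hx (Metric.self_subset_cthickening S hxS)
  rw [← hc x hxS]
  refine hopfLax_eq_self_of_forall_le ht0.ne' fun y => ?_
  rw [hc x hxS]
  have hpenalty : 0 ≤ dist x y ^ 2 / (2 * t) := by positivity
  by_cases hy : y ∈ S
  · have hfar : √(2 * T * (c - m)) ≤ dist x y := by
      by_contra! hlt
      exact hx (Metric.mem_cthickening_of_dist_le x y _ S hy hlt.le)
    have hgain : 2 * T * (c - m) ≤ dist x y ^ 2 := (Real.sqrt_le_iff.mp hfar).2
    have hT : dist x y ^ 2 / (2 * T) ≤ dist x y ^ 2 / (2 * t) :=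
      div_le_div_of_nonneg_left (sq_nonneg _) (by positivity) (by linarith)
    have hcm : c - m ≤ dist x y ^ 2 / (2 * T) := by
      rw [le_div_iff₀ (by linarith)]
      linarith
    linarith [hm y]
  · rw [hc y hy]
    linarith

end HopfLax

/-- Let `ψ : X → ℝ` be bounded and constant equal to `c` outside a bounded set
`S`. Then there is a bounded set `B` with `Q_s ψ (x) = c` for every `s ∈ (0,1]` and `x ∉ B`. -/
theorem stmt10 {X : Type*} [MetricSpace X] (ψ : X → ℝ)
    (hb : ∃ M : ℝ, ∀ x, |ψ x| ≤ M)
    (c : ℝ) (S : Set X) (hS : Bornology.IsBounded S) (hc : ∀ x ∉ S, ψ x = c) :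
    ∃ B : Set X, Bornology.IsBounded B ∧
      ∀ s ∈ Set.Ioc (0:ℝ) 1, ∀ x ∉ B, hopfLax ψ s x = c := by
  obtain ⟨M, hM⟩ := hb
  have hlower : ∀ y, -M ≤ ψ y := fun y => neg_le_of_abs_le (hM y)
  exact ⟨_, hS.cthickening, fun s hs x hx => hopfLax_eq_of_eq_const_off hlower hc hs hx⟩
end

section
/- Let (X,d) be a complete separable metric space, ν a finite Borel measure on X, C > 0, and (μ_n) a sequence of Borel probability measures on X with μ_n ≤ Cν for every n. Assume μ_n converges to a Borel probability measure μ in duality with C_b(X), i.e. ∫ f dμ_n → ∫ f dμ for every bounded continuous f : X → ℝ. Then μ ≤ Cν and ∫ g dμ_n → ∫ g dμ for every bounded Borel function g : X → ℝ. -/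
open Filter MeasureTheory Set Topology
open scoped BoundedContinuousFunction

/-!
Weak convergence bounds the measure of every open set from below by the liminf (portmanteau),
so `μ U ≤ C ν U` for open `U`, and outer regularity of the finite measure `C ν` extends this to
all Borel sets. For a bounded Borel `g`, approximate it in `L¹(C ν)` within `ε` by a bounded
continuous `f`: since every `μ n` and `μ` lie below `C ν`, the same `f` approximates `g` within
`ε` in `L¹(μ n)` uniformly in `n` and in `L¹(μ)`, and `∫ f dμ n → ∫ f dμ`.
-/

theorem tendsto_of_forall_dist_le_of_tendsto {ι E : Type*} [PseudoMetricSpace E] {l : Filter ι}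
    {a : ι → E} {α : E}
    (h : ∀ ε > 0, ∃ (b : ι → E) (β : E), Tendsto b l (𝓝 β) ∧ (∀ i, dist (a i) (b i) ≤ ε) ∧
      dist β α ≤ ε) :
    Tendsto a l (𝓝 α) := by
  refine Metric.tendsto_nhds.mpr fun ε hε => ?_
  obtain ⟨b, β, hb, hab, hβ⟩ := h (ε / 3) (by positivity)
  filter_upwards [Metric.tendsto_nhds.mp hb (ε / 3) (by positivity)] with i hi
  calc dist (a i) α ≤ dist (a i) (b i) + dist (b i) β + dist β α := dist_triangle4 _ _ _ _
    _ < ε := by linarith [hab i]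

theorem norm_integral_sub_le_integral_norm_sub_of_le {X E : Type*} [MeasurableSpace X]
    [NormedAddCommGroup E] [NormedSpace ℝ E] {ρ D : Measure X} (hρ : ρ ≤ D) {f g : X → E}
    (hf : Integrable f D) (hg : Integrable g D) :
    ‖∫ x, f x ∂ρ - ∫ x, g x ∂ρ‖ ≤ ∫ x, ‖f x - g x‖ ∂D := by
  rw [← integral_sub (hf.mono_measure hρ) (hg.mono_measure hρ)]
  calc ‖∫ x, f x - g x ∂ρ‖ ≤ ∫ x, ‖f x - g x‖ ∂ρ := norm_integral_le_integral_norm _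
    _ ≤ ∫ x, ‖f x - g x‖ ∂D :=
      integral_mono_measure hρ (ae_of_all _ fun _ => norm_nonneg _) (hf.sub hg).norm

theorem tendsto_integral_of_le_of_tendsto_integral_boundedContinuous {X ι : Type*}
    [TopologicalSpace X] [NormalSpace X] [MeasurableSpace X] [BorelSpace X] {l : Filter ι}
    {D : Measure X} [IsFiniteMeasure D] [D.WeaklyRegular] {ρ : ι → Measure X} {ρlim : Measure X}
    (hρ : ∀ i, ρ i ≤ D) (hρlim : ρlim ≤ D)
    (hconv : ∀ f : X →ᵇ ℝ, Tendsto (fun i => ∫ x, f x ∂ρ i) l (𝓝 (∫ x, f x ∂ρlim)))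
    {g : X → ℝ} (hg : Integrable g D) :
    Tendsto (fun i => ∫ x, g x ∂ρ i) l (𝓝 (∫ x, g x ∂ρlim)) := by
  refine tendsto_of_forall_dist_le_of_tendsto fun ε hε => ?_
  obtain ⟨f, hgf, hf⟩ := hg.exists_boundedContinuous_integral_sub_le hε
  refine ⟨fun i => ∫ x, f x ∂ρ i, ∫ x, f x ∂ρlim, hconv f, fun i => ?_, ?_⟩
  · exact (norm_integral_sub_le_integral_norm_sub_of_le (hρ i) hg hf).trans hgf
  · rw [dist_comm]
    exact (norm_integral_sub_le_integral_norm_sub_of_le hρlim hg hf).trans hgf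

theorem MeasureTheory.ProbabilityMeasure.le_of_tendsto_of_forall_le {X ι : Type*}
    [TopologicalSpace X] [MeasurableSpace X] [OpensMeasurableSpace X] [HasOuterApproxClosed X]
    {l : Filter ι} [l.NeBot] {P : ι → ProbabilityMeasure X} {Q : ProbabilityMeasure X}
    (hPQ : Tendsto P l (𝓝 Q)) {D : Measure X} [D.OuterRegular] (hP : ∀ i, (P i : Measure X) ≤ D) :
    (Q : Measure X) ≤ D := by
  have hopen : ∀ U, IsOpen U → (Q : Measure X) U ≤ D U := fun U hU =>
    (le_liminf_measure_open_of_tendsto hPQ hU).trans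
      (liminf_le_of_frequently_le' (Frequently.of_forall fun i => hP i U))
  refine Measure.le_iff.mpr fun s _ => ?_
  rw [Set.measure_eq_iInf_isOpen s D]
  exact le_iInf₂ fun U hsU => le_iInf fun hU => (measure_mono hsU).trans (hopen U hU)

theorem stmt11_general {X : Type*} [MetricSpace X] [MeasurableSpace X] [BorelSpace X]
    (ν : MeasureTheory.Measure X) [MeasureTheory.IsFiniteMeasure ν]
    (C : ℝ)
    (μ : ℕ → MeasureTheory.Measure X) (hprob : ∀ n, MeasureTheory.IsProbabilityMeasure (μ n))
    (hle : ∀ n, μ n ≤ ENNReal.ofReal C • ν)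
    (μlim : MeasureTheory.Measure X) (hproblim : MeasureTheory.IsProbabilityMeasure μlim)
    (hconv : ∀ f : X → ℝ, Continuous f → (∃ M : ℝ, ∀ x, |f x| ≤ M) →
      Tendsto (fun n => ∫ x, f x ∂ μ n) atTop (𝓝 (∫ x, f x ∂ μlim))) :
    μlim ≤ ENNReal.ofReal C • ν ∧
      ∀ g : X → ℝ, Measurable g → (∃ M : ℝ, ∀ x, |g x| ≤ M) →
        Tendsto (fun n => ∫ x, g x ∂ μ n) atTop (𝓝 (∫ x, g x ∂ μlim)) := by
  have : IsFiniteMeasure (ENNReal.ofReal C • ν) := ν.smul_finite ENNReal.ofReal_ne_top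
  have hconv' (f : X →ᵇ ℝ) : Tendsto (fun n => ∫ x, f x ∂μ n) atTop (𝓝 (∫ x, f x ∂μlim)) :=
    hconv f f.continuous ⟨‖f‖, f.norm_coe_le_norm⟩
  have hlim : μlim ≤ ENNReal.ofReal C • ν :=
    ProbabilityMeasure.le_of_tendsto_of_forall_le (P := fun n => ⟨μ n, hprob n⟩)
      (Q := ⟨μlim, hproblim⟩) (ProbabilityMeasure.tendsto_iff_forall_integral_tendsto.mpr hconv')
      hle
  exact ⟨hlim, fun g hg ⟨M, hM⟩ =>
    tendsto_integral_of_le_of_tendsto_integral_boundedContinuous hle hlim hconv'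
      (.of_bound hg.aestronglyMeasurable M (ae_of_all _ hM))⟩

/-- Let `X` be complete separable metric, `ν` a finite Borel measure, `C > 0`,
and `μ_n` Borel probability measures with `μ_n ≤ C ν`, converging to a probability measure `μ` in
duality with `C_b(X)`. Then `μ ≤ C ν` and `∫ g dμ_n → ∫ g dμ` for every bounded Borel `g`. -/
theorem stmt11 {X : Type*} [MetricSpace X] [CompleteSpace X]
    [TopologicalSpace.SeparableSpace X] [MeasurableSpace X] [BorelSpace X]
    (ν : MeasureTheory.Measure X) [MeasureTheory.IsFiniteMeasure ν]
    (C : ℝ) (hC : 0 < C)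
    (μ : ℕ → MeasureTheory.Measure X) (hprob : ∀ n, MeasureTheory.IsProbabilityMeasure (μ n))
    (hle : ∀ n, μ n ≤ ENNReal.ofReal C • ν)
    (μlim : MeasureTheory.Measure X) (hproblim : MeasureTheory.IsProbabilityMeasure μlim)
    (hconv : ∀ f : X → ℝ, Continuous f → (∃ M : ℝ, ∀ x, |f x| ≤ M) →
      Tendsto (fun n => ∫ x, f x ∂ μ n) atTop (𝓝 (∫ x, f x ∂ μlim))) :
    μlim ≤ ENNReal.ofReal C • ν ∧
      ∀ g : X → ℝ, Measurable g → (∃ M : ℝ, ∀ x, |g x| ≤ M) →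
        Tendsto (fun n => ∫ x, g x ∂ μ n) atTop (𝓝 (∫ x, g x ∂ μlim)) :=
  stmt11_general ν C μ hprob hle μlim hproblim hconv
end

section
/- Let (X,d) be a metric space and let γ : [0,1] → X be an absolutely continuous curve. Then for a.e. t ∈ [0,1] the limit |γ̇_t| := lim_{h→0} d(γ_{t+h},γ_t)/|h| exists; the function t ↦ |γ̇_t| belongs to L¹(0,1), satisfies d(γ_t,γ_s) ≤ ∫_t^s |γ̇_r| dr for all t < s, and is minimal in the a.e. sense among admissible integrands: for every f ∈ L¹(0,1) with d(γ_s,γ_t) ≤ ∫_t^s f(r) dr for all t < s, one has |γ̇_t| ≤ f(t) for a.e. t. -/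
open Filter MeasureTheory Set Topology
open scoped ENNReal NNReal Classical

/-- The metric speed of a curve `γ` at time `t`: the limit of `d(γ s, γ t)/|s - t|` as `s → t`,
if it exists (and `0` otherwise). -/
noncomputable def metricSpeed {X : Type*} [MetricSpace X] (γ : ℝ → X) (t : ℝ) : ℝ :=
  if h : ∃ L : ℝ, Tendsto (fun s => dist (γ s) (γ t) / |s - t|) (𝓝[≠] t) (𝓝 L) then h.choose
  else 0

/-- `γ : [0,1] → X` is absolutely continuous: there is `f ∈ L¹(0,1)` with
`d(γ_t, γ_s) ≤ ∫_t^s f` for all `0 ≤ t ≤ s ≤ 1`. -/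
def IsAC {X : Type*} [MetricSpace X] (γ : ℝ → X) : Prop :=
  ∃ f : ℝ → ℝ, (∀ t, 0 ≤ f t) ∧ IntegrableOn f (Set.Icc 0 1) ∧
    ∀ t s : ℝ, 0 ≤ t → t ≤ s → s ≤ 1 → dist (γ t) (γ s) ≤ ∫ r in t..s, f r

/-!
Fix a countable set `D` dense in the image of `γ`. For `y ∈ D` the real function
`u ↦ d(γ u, y)` is dominated by the same integrand `f` as `γ`, hence absolutely continuous,
differentiable a.e., and at Lebesgue points of `f` its derivative is bounded by `f`. So
`g := sup_{y ∈ D} |d/du d(γ u, y)|` is integrable, the fundamental theorem of calculus gives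
`|d(γ s, y) - d(γ t, y)| ≤ ∫_t^s g`, and density of `D` upgrades this to `d(γ t, γ s) ≤ ∫_t^s g`.
At a Lebesgue point of `g` the difference quotients of `γ` are squeezed between the
`|d/du d(γ u, y)|`, whose supremum is `g`, and the averages of `g`; hence they converge to `g`.
The same upper bound with any admissible integrand in place of `g` gives minimality.
-/

lemma AbsolutelyContinuousOnInterval.of_dist_le {X Y : Type*} [PseudoMetricSpace X]
    [PseudoMetricSpace Y] {f : ℝ → X} {g : ℝ → Y} {a b : ℝ}
    (hg : AbsolutelyContinuousOnInterval g a b)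
    (hfg : ∀ x ∈ uIcc a b, ∀ y ∈ uIcc a b, dist (f x) (f y) ≤ dist (g x) (g y)) :
    AbsolutelyContinuousOnInterval f a b := by
  refine squeeze_zero' (.of_forall fun _ => Finset.sum_nonneg fun _ _ => dist_nonneg) ?_ hg
  filter_upwards [mem_inf_of_right (mem_principal_self _)] with E hE
  exact Finset.sum_le_sum fun i hi => hfg _ (hE.1 i hi).1 _ (hE.1 i hi).2

lemma dist_le_of_abs_dist_sub_le {X : Type*} [PseudoMetricSpace X] {D : Set X} {x z : X}
    {C : ℝ} (hz : z ∈ closure D) (h : ∀ y ∈ D, |dist x y - dist z y| ≤ C) : dist x z ≤ C := by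
  refine le_of_forall_pos_le_add fun ε hε => ?_
  obtain ⟨y, hyD, hzy⟩ := Metric.mem_closure_iff.1 hz (ε / 2) (half_pos hε)
  have hxy := (le_abs_self _).trans (h y hyD)
  linarith [dist_triangle x y z, dist_comm y z]

lemma ae_tendsto_slope_integral {g : ℝ → ℝ} {a b : ℝ} (hg : IntegrableOn g (Icc a b))
    (hab : a ≤ b) : ∀ᵐ t ∂volume.restrict (Ioo a b),
      Tendsto (slope (fun u => ∫ r in t..u, g r) t) (𝓝[≠] t) (𝓝 (g t)) := by
  have hgi : IntervalIntegrable g volume a b :=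
    (hg.mono_set (uIcc_of_le hab).subset).intervalIntegrable
  rw [ae_restrict_iff' measurableSet_Ioo]
  filter_upwards [hgi.ae_hasDerivAt_integral] with t ht htab
  have htab' : t ∈ uIcc a b := by rw [uIcc_of_le hab]; exact Ioo_subset_Icc_self htab
  exact hasDerivAt_iff_tendsto_slope.1 (ht htab' t htab')

section

variable {X Y : Type*} [PseudoMetricSpace X] [PseudoMetricSpace Y]

noncomputable def distSlope (γ : ℝ → X) (t s : ℝ) : ℝ := dist (γ s) (γ t) / |s - t|

lemma abs_slope_eq_distSlope (φ : ℝ → ℝ) (t s : ℝ) : |slope φ t s| = distSlope φ t s := by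
  rw [slope_def_field, abs_div, distSlope, Real.dist_eq]

lemma distSlope_dist_le (γ : ℝ → X) (y : X) (t s : ℝ) :
    distSlope (fun u => dist (γ u) y) t s ≤ distSlope γ t s :=
  div_le_div_of_nonneg_right (by rw [Real.dist_eq]; exact abs_dist_sub_le _ _ _) (abs_nonneg _)

lemma tendsto_distSlope_of_hasDerivAt {φ : ℝ → ℝ} {t φ' : ℝ} (h : HasDerivAt φ φ' t) :
    Tendsto (distSlope φ t) (𝓝[≠] t) (𝓝 |φ'|) := by
  rw [show distSlope φ t = fun s => |slope φ t s| from
    funext (abs_slope_eq_distSlope φ t · |>.symm)]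
  exact (continuous_abs.tendsto φ').comp (hasDerivAt_iff_tendsto_slope.1 h)

noncomputable def supAbsDerivDist (γ : ℝ → X) (D : Set X) (t : ℝ) : ℝ :=
  ⨆ y : D, |deriv (fun u => dist (γ u) y) t|

lemma abs_deriv_dist_le_supAbsDerivDist {γ : ℝ → X} {D : Set X} {t C : ℝ}
    (hC : ∀ y : D, |deriv (fun u => dist (γ u) y) t| ≤ C) (y : D) :
    |deriv (fun u => dist (γ u) y) t| ≤ supAbsDerivDist γ D t :=
  le_ciSup ⟨C, forall_mem_range.2 hC⟩ y

def DistLeIntegralOn (γ : ℝ → X) (g : ℝ → ℝ) (a b : ℝ) : Prop :=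
  ∀ t s : ℝ, a ≤ t → t ≤ s → s ≤ b → dist (γ t) (γ s) ≤ ∫ r in t..s, g r

namespace DistLeIntegralOn

variable {γ : ℝ → X} {f g : ℝ → ℝ} {a b : ℝ}

lemma of_dist_le (h : DistLeIntegralOn γ g a b) {φ : ℝ → Y}
    (hφ : ∀ t s, dist (φ t) (φ s) ≤ dist (γ t) (γ s)) : DistLeIntegralOn φ g a b :=
  fun t s hat hts hsb => (hφ t s).trans (h t s hat hts hsb)

lemma dist_le_dist_primitive (h : DistLeIntegralOn γ g a b) (hg : IntegrableOn g (Icc a b))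
    {x y : ℝ} (hx : x ∈ Icc a b) (hy : y ∈ Icc a b) :
    dist (γ x) (γ y) ≤ dist (∫ r in a..x, g r) (∫ r in a..y, g r) := by
  wlog hxy : x ≤ y generalizing x y
  · rw [dist_comm, dist_comm (∫ r in a..x, g r)]
    exact this hy hx (le_of_not_ge hxy)
  have hgi : ∀ z ∈ Icc a b, IntervalIntegrable g volume a z := fun z hz =>
    (hg.mono_set (uIcc_subset_Icc (left_mem_Icc.2 (hz.1.trans hz.2)) hz)).intervalIntegrable
  rw [Real.dist_eq, intervalIntegral.integral_interval_sub_left (hgi x hx) (hgi y hy),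
    intervalIntegral.integral_symm, abs_neg]
  exact (h x y hx.1 hxy hy.2).trans (le_abs_self _)

lemma absolutelyContinuousOnInterval (h : DistLeIntegralOn γ g a b)
    (hg : IntegrableOn g (Icc a b)) (hab : a ≤ b) : AbsolutelyContinuousOnInterval γ a b := by
  refine (((hg.mono_set (uIcc_of_le hab).subset).intervalIntegrable
    ).absolutelyContinuousOnInterval_intervalIntegral left_mem_uIcc).of_dist_le ?_
  rw [uIcc_of_le hab]
  exact fun x hx y hy => h.dist_le_dist_primitive hg hx hy

lemma continuousOn (h : DistLeIntegralOn γ g a b) (hg : IntegrableOn g (Icc a b)) (hab : a ≤ b) :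
    ContinuousOn γ (Icc a b) := by
  have hF := intervalIntegral.continuousOn_primitive_interval (hg.mono_set (uIcc_of_le hab).subset)
  rw [uIcc_of_le hab] at hF
  intro t ht
  rw [ContinuousWithinAt, tendsto_iff_dist_tendsto_zero]
  refine squeeze_zero' (.of_forall fun _ => dist_nonneg)
    (eventually_mem_nhdsWithin.mono fun s hs => h.dist_le_dist_primitive hg hs ht) ?_
  simpa using (hF t ht).tendsto.dist (tendsto_const_nhds (x := ∫ r in a..t, g r))

lemma distSlope_le_slope (h : DistLeIntegralOn γ g a b) {t s : ℝ} (ht : t ∈ Icc a b)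
    (hs : s ∈ Icc a b) : distSlope γ t s ≤ slope (fun u => ∫ r in t..u, g r) t s := by
  rw [slope_def_field, intervalIntegral.integral_same, sub_zero, distSlope]
  rcases lt_trichotomy s t with hst | rfl | hts
  · rw [abs_of_neg (sub_neg.2 hst), intervalIntegral.integral_symm, neg_div, ← div_neg]
    exact div_le_div_of_nonneg_right (h s t hs.1 hst.le ht.2) (by linarith)
  · simp
  · rw [abs_of_pos (sub_pos.2 hts), dist_comm]
    exact div_le_div_of_nonneg_right (h t s ht.1 hts.le hs.2) (by linarith)

lemma dist_const (h : DistLeIntegralOn γ g a b) (y : X) :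
    DistLeIntegralOn (fun u => dist (γ u) y) g a b :=
  h.of_dist_le fun t s => by rw [Real.dist_eq]; exact abs_dist_sub_le _ _ _

lemma eventually_distSlope_le_slope (h : DistLeIntegralOn γ g a b) {t : ℝ} (ht : t ∈ Ioo a b) :
    ∀ᶠ s in 𝓝[≠] t, distSlope γ t s ≤ slope (fun u => ∫ r in t..u, g r) t s := by
  filter_upwards [nhdsWithin_le_nhds (Icc_mem_nhds ht.1 ht.2)] with s hs
  exact h.distSlope_le_slope (Ioo_subset_Icc_self ht) hs

lemma ae_le_of_tendsto_distSlope (h : DistLeIntegralOn γ g a b) (hg : IntegrableOn g (Icc a b))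
    (hab : a ≤ b) : ∀ᵐ t ∂volume.restrict (Ioo a b),
      ∀ L, Tendsto (distSlope γ t) (𝓝[≠] t) (𝓝 L) → L ≤ g t := by
  filter_upwards [ae_tendsto_slope_integral hg hab, ae_restrict_mem measurableSet_Ioo]
    with t hslope ht L hL
  exact le_of_tendsto_of_tendsto hL hslope (h.eventually_distSlope_le_slope ht)

lemma ae_abs_deriv_le {φ : ℝ → ℝ} (h : DistLeIntegralOn φ f a b) (hf : IntegrableOn f (Icc a b))
    (hab : a ≤ b) : ∀ᵐ t ∂volume.restrict (Ioo a b), |deriv φ t| ≤ f t := by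
  filter_upwards [h.ae_le_of_tendsto_distSlope hf hab,
    ae_restrict_of_ae (h.absolutelyContinuousOnInterval hf hab).ae_differentiableAt,
    ae_restrict_mem measurableSet_Ioo] with t hle hdiff ht
  rw [uIcc_of_le hab] at hdiff
  exact hle _ (tendsto_distSlope_of_hasDerivAt (hdiff (Ioo_subset_Icc_self ht)).hasDerivAt)

lemma of_ae_abs_deriv_le {φ : ℝ → ℝ} (h : DistLeIntegralOn φ f a b)
    (hf : IntegrableOn f (Icc a b)) (hab : a ≤ b) (hg : IntegrableOn g (Icc a b))
    (hφg : ∀ᵐ t ∂volume.restrict (Ioo a b), |deriv φ t| ≤ g t) : DistLeIntegralOn φ g a b := by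
  intro t s hat hts hsb
  have hφ : AbsolutelyContinuousOnInterval φ t s :=
    (h.absolutelyContinuousOnInterval hf hab).mono (by
      rw [uIcc_of_le hab, uIcc_of_le hts]; exact Icc_subset_Icc hat hsb)
  rw [Real.dist_eq, abs_sub_comm, ← hφ.integral_deriv_eq_sub]
  refine (intervalIntegral.abs_integral_le_integral_abs hts).trans
    (intervalIntegral.integral_mono_ae_restrict hts hφ.intervalIntegrable_deriv.abs
      (hg.mono_set (uIcc_subset_Icc ⟨hat, hts.trans hsb⟩ ⟨hat.trans hts, hsb⟩)).intervalIntegrable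
      (ae_restrict_of_ae_restrict_of_subset (Icc_subset_Icc hat hsb) ?_))
  rwa [← Measure.restrict_congr_set Ioo_ae_eq_Icc]

lemma ae_abs_deriv_dist_le (h : DistLeIntegralOn γ f a b) (hf : IntegrableOn f (Icc a b))
    (hab : a ≤ b) (D : Set X) [Countable D] : ∀ᵐ t ∂volume.restrict (Ioo a b),
      ∀ y : D, |deriv (fun u => dist (γ u) y) t| ≤ f t :=
  ae_all_iff.2 fun y => (h.dist_const y).ae_abs_deriv_le hf hab

lemma integrableOn_supAbsDerivDist (h : DistLeIntegralOn γ f a b)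
    (hf : IntegrableOn f (Icc a b)) (hab : a ≤ b) (D : Set X) [Countable D] [Nonempty D] :
    IntegrableOn (supAbsDerivDist γ D) (Icc a b) := by
  rw [integrableOn_Icc_iff_integrableOn_Ioo]
  refine (hf.mono_set Ioo_subset_Icc_self).mono'
    (Measurable.iSup fun _ => (measurable_deriv _).abs).aestronglyMeasurable ?_
  filter_upwards [h.ae_abs_deriv_dist_le hf hab D] with t ht
  rw [Real.norm_eq_abs, supAbsDerivDist, abs_of_nonneg (Real.iSup_nonneg fun _ => abs_nonneg _)]
  exact ciSup_le ht

lemma distLeIntegralOn_supAbsDerivDist {D : Set X} [Countable D] [Nonempty D]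
    (h : DistLeIntegralOn γ f a b) (hf : IntegrableOn f (Icc a b)) (hab : a ≤ b)
    (hD : ∀ t ∈ Icc a b, γ t ∈ closure D) :
    DistLeIntegralOn γ (supAbsDerivDist γ D) a b := by
  intro t s hat hts hsb
  refine dist_le_of_abs_dist_sub_le (hD s ⟨hat.trans hts, hsb⟩) fun y hy => ?_
  rw [← Real.dist_eq]
  refine (h.dist_const y).of_ae_abs_deriv_le hf hab (h.integrableOn_supAbsDerivDist hf hab D)
    ?_ t s hat hts hsb
  filter_upwards [h.ae_abs_deriv_dist_le hf hab D] with u hu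
  exact abs_deriv_dist_le_supAbsDerivDist hu ⟨y, hy⟩

theorem ae_tendsto_distSlope {D : Set X} [Countable D] [Nonempty D]
    (h : DistLeIntegralOn γ f a b) (hf : IntegrableOn f (Icc a b)) (hab : a ≤ b)
    (hD : ∀ t ∈ Icc a b, γ t ∈ closure D) :
    ∀ᵐ t ∂volume.restrict (Ioo a b),
      Tendsto (distSlope γ t) (𝓝[≠] t) (𝓝 (supAbsDerivDist γ D t)) := by
  have hdiff : ∀ᵐ t, ∀ y : D, t ∈ uIcc a b → DifferentiableAt ℝ (fun u => dist (γ u) y) t :=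
    ae_all_iff.2 fun y =>
      ((h.dist_const y).absolutelyContinuousOnInterval hf hab).ae_differentiableAt
  filter_upwards [ae_tendsto_slope_integral (h.integrableOn_supAbsDerivDist hf hab D) hab,
    ae_restrict_of_ae hdiff, ae_restrict_mem measurableSet_Ioo] with t hslope hd ht
  refine tendsto_order.2 ⟨fun c hc => ?_, fun c hc => ?_⟩
  · obtain ⟨y, hy⟩ := exists_lt_of_lt_ciSup hc
    have hyt := (hd y (by rw [uIcc_of_le hab]; exact Ioo_subset_Icc_self ht)).hasDerivAt
    filter_upwards [(tendsto_distSlope_of_hasDerivAt hyt).eventually (lt_mem_nhds hy)] with s hs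
    exact hs.trans_le (distSlope_dist_le γ y t s)
  · have hγD := h.distLeIntegralOn_supAbsDerivDist hf hab hD
    filter_upwards [hγD.eventually_distSlope_le_slope ht, hslope.eventually (gt_mem_nhds hc)]
      with s hle hlt
    exact hle.trans_lt hlt

end DistLeIntegralOn

end

lemma metricSpeed_eq_of_tendsto {X : Type*} [MetricSpace X] {γ : ℝ → X} {t L : ℝ}
    (h : Tendsto (distSlope γ t) (𝓝[≠] t) (𝓝 L)) : metricSpeed γ t = L := by
  have hex : ∃ L, Tendsto (fun s => dist (γ s) (γ t) / |s - t|) (𝓝[≠] t) (𝓝 L) := ⟨L, h⟩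
  rw [metricSpeed, dif_pos hex]
  exact tendsto_nhds_unique hex.choose_spec h

/-- For an absolutely continuous curve `γ : [0,1] → X`, the metric speed
`|γ̇_t| = lim_{h→0} d(γ_{t+h},γ_t)/|h|` exists for a.e. `t ∈ [0,1]`; it belongs to `L¹(0,1)`,
satisfies `d(γ_t,γ_s) ≤ ∫_t^s |γ̇_r| dr` for all `t ≤ s`, and is a.e. minimal among the
admissible integrands `f` in the definition of absolute continuity. -/
theorem stmt14 {X : Type*} [MetricSpace X] (γ : ℝ → X) (hγ : IsAC γ) :
    (∀ᵐ t ∂(MeasureTheory.volume.restrict (Set.Ioo (0:ℝ) 1)),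
      ∃ L : ℝ, Tendsto (fun s => dist (γ s) (γ t) / |s - t|) (𝓝[≠] t) (𝓝 L)) ∧
    IntegrableOn (metricSpeed γ) (Set.Icc 0 1) ∧
    (∀ t s : ℝ, 0 ≤ t → t ≤ s → s ≤ 1 → dist (γ t) (γ s) ≤ ∫ r in t..s, metricSpeed γ r) ∧
    (∀ f : ℝ → ℝ, IntegrableOn f (Set.Icc 0 1) →
      (∀ t s : ℝ, 0 ≤ t → t ≤ s → s ≤ 1 → dist (γ t) (γ s) ≤ ∫ r in t..s, f r) →
      ∀ᵐ t ∂(MeasureTheory.volume.restrict (Set.Ioo (0:ℝ) 1)), metricSpeed γ t ≤ f t) := by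
  obtain ⟨f, -, hf, hγf⟩ := hγ
  have hγf : DistLeIntegralOn γ f 0 1 := hγf
  have h01 : (0:ℝ) ≤ 1 := zero_le_one
  obtain ⟨D, hDc, hγD⟩ :=
    (isCompact_Icc.image_of_continuousOn (hγf.continuousOn hf h01)).isSeparable
  have hD : ∀ t ∈ Icc (0:ℝ) 1, γ t ∈ closure D := fun t ht => hγD (mem_image_of_mem γ ht)
  have : Countable D := hDc.to_subtype
  have : Nonempty D := (closure_nonempty_iff.1 ⟨_, hD 0 (left_mem_Icc.2 h01)⟩).to_subtype
  have hspeed := hγf.ae_tendsto_distSlope hf h01 hD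
  have heq : metricSpeed γ =ᵐ[volume.restrict (Icc 0 1)] supAbsDerivDist γ D := by
    rw [← Measure.restrict_congr_set Ioo_ae_eq_Icc]
    exact hspeed.mono fun t ht => metricSpeed_eq_of_tendsto ht
  refine ⟨hspeed.mono fun t ht => ⟨_, ht⟩,
    (hγf.integrableOn_supAbsDerivDist hf h01 D).congr_fun_ae heq.symm,
    fun t s ht hts hs => ?_, fun f' hf' hγf' => ?_⟩
  · rw [intervalIntegral.integral_congr_ae_restrict (ae_restrict_of_ae_restrict_of_subset
      (by rw [uIoc_of_le hts]; exact Ioc_subset_Icc_self.trans (Icc_subset_Icc ht hs)) heq)]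
    exact hγf.distLeIntegralOn_supAbsDerivDist hf h01 hD t s ht hts hs
  · filter_upwards [hspeed, DistLeIntegralOn.ae_le_of_tendsto_distSlope hγf' hf' h01]
      with t ht hle
    rw [metricSpeed_eq_of_tendsto ht]
    exact hle _ ht
end
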